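/- arXiv:math/0308016 — 10 statements merged into one kernel-verified Lean document; each statement's English description precedes it below -/
import Mathlib

section
/- The set of nonzero degree-1 codifferentials is the union of exactly two orbits under the GL₂(K)×Kˣ action: the orbit of ((0,1),(0,0)) (the codifferential ψ^{0,1,0}_3) and the orbit of ((0,0),(1,0)) (the codifferential ψ^{0,0,1}_1); every nonzero degree-1 codifferential lies in exactly one of these two orbits, and the two orbits are disjoint. -/
namespace LinfClassification

variable {K : Type*} [Field K] [CharZero K]

/-- The codifferential condition for a degree-1 structure `(u, v)`. -/
def IsCodiff1 (d : (K × K) × (K × K)) : Prop :=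
  d.1.1 * d.2.1 = 0 ∧ d.1.2 * d.2.1 = 0 ∧ d.1.1 * d.2.2 = 0 ∧ d.1.2 * d.2.2 = 0

/-- The action of `(g, q) ∈ GL₂(K) × Kˣ`, with `g = [[p, q'], [r, s]]` (so
`det g = p·s - q'·r ≠ 0`) and scalar `t ≠ 0`, on a degree-1 structure:
`(g,t)·(u,v) = (t⁻¹·(u g), t·g⁻¹ v)`, `u` a row vector and `v` a column vector. -/
def act1 (p q r s t : K) (d : (K × K) × (K × K)) : (K × K) × (K × K) :=
  ((t⁻¹ * (d.1.1 * p + d.1.2 * r), t⁻¹ * (d.1.1 * q + d.1.2 * s)),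
   (t * (p * s - q * r)⁻¹ * (s * d.2.1 - q * d.2.2),
    t * (p * s - q * r)⁻¹ * (-r * d.2.1 + p * d.2.2)))

/-- Two degree-1 structures are equivalent if they lie in the same orbit. -/
def Equiv1 (d d' : (K × K) × (K × K)) : Prop :=
  ∃ p q r s t : K, p * s - q * r ≠ 0 ∧ t ≠ 0 ∧ act1 p q r s t d = d'

/-- The codifferential `ψ^{0,1,0}_3`. -/
def N1 : (K × K) × (K × K) := ((0, 1), (0, 0))

/-- The codifferential `ψ^{0,0,1}_1`. -/
def N2 : (K × K) × (K × K) := ((0, 0), (1, 0))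

/-!
A codifferential has `u = 0` or `v = 0`, and the action is linear in `u` and in `v`,
so whether `u` (resp. `v`) vanishes is an orbit invariant; this separates the two orbits.
Conversely a nonzero `u = (a, b)` has a partner `(x, y)` with `a x + b y = 1`, and
`g = [[-b, x], [a, y]]` (of determinant `-1`) sends `u` to `(0, 1)`; likewise a nonzero
`v = (c, e)` with `x c + y e = 1` is the first column of `g = [[c, -y], [e, x]]` (of determinant `1`),
so `g⁻¹ v = (1, 0)`.
-/

section

variable {F : Type*} [Field F]

theorem isCoprime_of_ne_zero {a b : F} (h : (a, b) ≠ 0) :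
    IsCoprime a b := by
  by_cases ha : a = 0
  · have hb : b ≠ 0 := fun hb => h (by simp [ha, hb])
    exact ⟨0, b⁻¹, by simp [hb]⟩
  · exact ⟨a⁻¹, 0, by simp [ha]⟩

theorem isCodiff1_iff {d : (F × F) × (F × F)} : IsCodiff1 d ↔ d.1 = 0 ∨ d.2 = 0 := by
  obtain ⟨⟨a, b⟩, ⟨c, e⟩⟩ := d
  simp only [IsCodiff1, mul_eq_zero, Prod.ext_iff, Prod.fst_zero, Prod.snd_zero]
  tauto

theorem Equiv1.fst_eq_zero {d d' : (F × F) × (F × F)} (h : Equiv1 d d') (hd : d.1 = 0) :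
    d'.1 = 0 := by
  obtain ⟨p, q, r, s, t, -, -, rfl⟩ := h
  simp [act1, hd]

theorem Equiv1.snd_eq_zero {d d' : (F × F) × (F × F)} (h : Equiv1 d d') (hd : d.2 = 0) :
    d'.2 = 0 := by
  obtain ⟨p, q, r, s, t, -, -, rfl⟩ := h
  simp [act1, hd]

theorem not_equiv1_N1_of_fst_eq_zero {d : (F × F) × (F × F)} (hd : d.1 = 0) :
    ¬ Equiv1 d N1 :=
  fun h => by simpa [N1] using h.fst_eq_zero hd

theorem not_equiv1_N2_of_snd_eq_zero {d : (F × F) × (F × F)} (hd : d.2 = 0) :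
    ¬ Equiv1 d N2 :=
  fun h => by simpa [N2] using h.snd_eq_zero hd

theorem equiv1_N1 {a b : F} (h : (a, b) ≠ 0) : Equiv1 ((a, b), (0, 0)) N1 := by
  obtain ⟨x, y, hxy⟩ := isCoprime_of_ne_zero h
  have hdet : -b * y - x * a = -1 := by linear_combination -hxy
  refine ⟨-b, x, a, y, 1, by rw [hdet]; exact neg_ne_zero.mpr one_ne_zero, one_ne_zero, ?_⟩
  simp only [act1, N1, Prod.mk.injEq]
  refine ⟨⟨by ring, by linear_combination hxy⟩, by simp, by simp⟩

theorem equiv1_N2 {c e : F} (h : (c, e) ≠ 0) : Equiv1 ((0, 0), (c, e)) N2 := by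
  obtain ⟨x, y, hxy⟩ := isCoprime_of_ne_zero h
  have hdet : c * x - -y * e = 1 := by linear_combination hxy
  refine ⟨c, -y, e, x, 1, by rw [hdet]; exact one_ne_zero, one_ne_zero, ?_⟩
  simp only [act1, N2, hdet, Prod.mk.injEq]
  refine ⟨⟨by simp, by simp⟩, by linear_combination hxy, by ring⟩

end

/-- Every nonzero degree-1 codifferential lies in exactly one of the orbits of
`ψ^{0,1,0}_3` and `ψ^{0,0,1}_1`, and these two orbits are disjoint. -/
theorem degree_one_two_orbits :
    (∀ d : (K × K) × (K × K), IsCodiff1 d → d ≠ ((0, 0), (0, 0)) →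
      (Equiv1 d N1 ∧ ¬ Equiv1 d N2) ∨ (Equiv1 d N2 ∧ ¬ Equiv1 d N1)) ∧
    ¬ Equiv1 (N1 : (K × K) × (K × K)) N2 := by
  refine ⟨fun ⟨u, v⟩ hcodiff hne => ?_, not_equiv1_N2_of_snd_eq_zero rfl⟩
  rcases isCodiff1_iff.mp hcodiff with hu | hv
  · obtain rfl : u = 0 := hu
    have hv : v ≠ 0 := fun hv => hne (by rw [hv]; rfl)
    exact Or.inr ⟨equiv1_N2 hv, not_equiv1_N1_of_fst_eq_zero rfl⟩
  · obtain rfl : v = 0 := hv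
    have hu : u ≠ 0 := fun hu => hne (by rw [hu]; rfl)
    exact Or.inl ⟨equiv1_N1 hu, not_equiv1_N2_of_snd_eq_zero rfl⟩

end LinfClassification
end

section
/- A degree-(m+2) structure (u,v,w) satisfies the six codifferential equations if and only if either (v = (0,0) and a₁a₅ + a₂a₆ = 0) or (a₅ = −(m+2)a₂, a₆ = (m+2)a₁, and a₁a₃ + a₂a₄ = 0). -/
namespace LinfClassification

variable {K : Type*} [Field K] [CharZero K]

/-- A degree-(m+2) structure `((a₁,a₂),(a₃,a₄),(a₅,a₆))` on the 1|2-dimensional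
graded space, encoding the odd coderivation
`d = a₁ψ^{1,0,m+1}_3 + a₂ψ^{0,1,m+1}_3 + a₃ψ^{0,0,m+2}_1 + a₄ψ^{0,0,m+2}_2
 + a₅ψ^{1,1,m}_1 + a₆ψ^{1,1,m}_2`. -/
abbrev Str (K : Type*) := (K × K) × (K × K) × (K × K)

/-- The six codifferential equations expressing `[d,d] = 0`. -/
def IsCodiff (m : ℕ) (d : Str K) : Prop :=
  d.1.1 * d.2.2.1 + d.1.2 * d.2.2.2 = 0 ∧
  d.1.1 * d.2.1.1 + d.1.2 * d.2.1.2 = 0 ∧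
  d.2.1.1 * (d.2.2.1 + ((m : K) + 2) * d.1.2) = 0 ∧
  d.2.1.2 * (d.2.2.1 + ((m : K) + 2) * d.1.2) = 0 ∧
  d.2.1.1 * (d.2.2.2 - ((m : K) + 2) * d.1.1) = 0 ∧
  d.2.1.2 * (d.2.2.2 - ((m : K) + 2) * d.1.1) = 0

/-- Action of `(g, q) ∈ GL₂(K) × Kˣ` with `g = [[p, q'], [r, s]]`
(`det g = p·s - q'·r ≠ 0`) and scalar `t ≠ 0` on a degree-(m+2) structure:
`(g,t)·(u,v,w) = (tᵐ·(u g), t^{m+2}·g⁻¹ v, det(g)·tᵐ·g⁻¹ w)`,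
`u` a row vector and `v, w` column vectors. -/
def act (m : ℕ) (p q r s t : K) (d : Str K) : Str K :=
  ((t ^ m * (d.1.1 * p + d.1.2 * r), t ^ m * (d.1.1 * q + d.1.2 * s)),
   (t ^ (m + 2) * (p * s - q * r)⁻¹ * (s * d.2.1.1 - q * d.2.1.2),
    t ^ (m + 2) * (p * s - q * r)⁻¹ * (-r * d.2.1.1 + p * d.2.1.2)),
   (t ^ m * (s * d.2.2.1 - q * d.2.2.2),
    t ^ m * (-r * d.2.2.1 + p * d.2.2.2)))

/-- Linear equivalence: two degree-(m+2) structures lie in the same orbit. -/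
def Equiv' (m : ℕ) (d d' : Str K) : Prop :=
  ∃ p q r s t : K, p * s - q * r ≠ 0 ∧ t ≠ 0 ∧ act m p q r s t d = d'

/-- The normal form `d_∞ = ψ^{1,1,m}_1`. -/
def dInf : Str K := ((0, 0), (0, 0), (1, 0))

/-- The normal form `d_λ = ψ^{0,1,m+1}_3 + λψ^{1,1,m}_1`. -/
def dLam (lam : K) : Str K := ((0, 1), (0, 0), (lam, 0))

/-- The normal form `d_* = ψ^{0,0,m+2}_1`. -/
def dStar : Str K := ((0, 0), (1, 0), (0, 0))

/-- The normal form `d_# = ψ^{0,1,m+1}_3 + ψ^{0,0,m+2}_1 - (m+2)ψ^{1,1,m}_1`. -/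
def dSharp (m : ℕ) : Str K := ((0, 1), (1, 0), (-((m : K) + 2), 0))

end LinfClassification

namespace LinfClassification

theorem fst_mul_eq_zero_and_snd_mul_eq_zero_iff {M₀ : Type*} [MulZeroClass M₀]
    [NoZeroDivisors M₀] (v : M₀ × M₀) (x : M₀) :
    v.1 * x = 0 ∧ v.2 * x = 0 ↔ v = (0, 0) ∨ x = 0 := by
  by_cases hx : x = 0 <;> simp [hx, Prod.ext_iff]

variable {K : Type*} [Field K]

/-- The last four equations say `v ⊗ (a₅ + (m+2)a₂, a₆ - (m+2)a₁) = 0`, and a tensor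
`v ⊗ x` vanishes only if `v = 0` or `x = 0`. -/
theorem isCodiff_iff (m : ℕ) (d : Str K) :
    IsCodiff m d ↔
      d.1.1 * d.2.2.1 + d.1.2 * d.2.2.2 = 0 ∧ d.1.1 * d.2.1.1 + d.1.2 * d.2.1.2 = 0 ∧
        (d.2.1 = (0, 0) ∨
          d.2.2.1 = -(((m : K) + 2) * d.1.2) ∧ d.2.2.2 = ((m : K) + 2) * d.1.1) := by
  refine and_congr_right' (and_congr_right' ?_)
  rw [← and_assoc, fst_mul_eq_zero_and_snd_mul_eq_zero_iff,
    fst_mul_eq_zero_and_snd_mul_eq_zero_iff, ← or_and_left, add_eq_zero_iff_eq_neg, sub_eq_zero]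

variable [CharZero K]

/-- A degree-(m+2) structure satisfies the six codifferential equations iff either
`v = (0,0)` and `a₁a₅ + a₂a₆ = 0`, or `a₅ = -(m+2)a₂`, `a₆ = (m+2)a₁` and
`a₁a₃ + a₂a₄ = 0`. -/
theorem codifferential_iff (m : ℕ) (d : Str K) :
    IsCodiff m d ↔
      (d.2.1 = (0, 0) ∧ d.1.1 * d.2.2.1 + d.1.2 * d.2.2.2 = 0) ∨
      (d.2.2.1 = -(((m : K) + 2) * d.1.2) ∧ d.2.2.2 = ((m : K) + 2) * d.1.1 ∧
        d.1.1 * d.2.1.1 + d.1.2 * d.2.1.2 = 0) := by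
  rw [isCodiff_iff]
  constructor
  · rintro ⟨hw, hv, hv0 | ⟨h₅, h₆⟩⟩
    · exact Or.inl ⟨hv0, hw⟩
    · exact Or.inr ⟨h₅, h₆, hv⟩
  · rintro (⟨hv0, hw⟩ | ⟨h₅, h₆, hv⟩)
    · exact ⟨hw, by simp [hv0], Or.inl hv0⟩
    · exact ⟨by rw [h₅, h₆]; ring, hv, Or.inr ⟨h₅, h₆⟩⟩

end LinfClassification
end

section
/- Let (u,v,w) be a degree-(m+2) codifferential with v = (0,0) and u ≠ (0,0). Then there exists a unique k ∈ K with w = k·(a₂, −a₁), and (u,v,w) is equivalent to d_k = ((0,1),(0,0),(k,0)). -/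
/-! Since `u ≠ 0` there are `q, s` with `a₁ q + a₂ s = 1`. The first codifferential equation
says `a₁ a₅ + a₂ a₆ = 0`, which forces `w = k (a₂, -a₁)` with `k = s a₅ - q a₆`, and
`g = [[a₂, q], [-a₁, s]]` (of determinant `1`, with `t = 1`) carries `u` to `(0, 1)` and
`w` to `(k, 0)`. -/

namespace LinfClassification

variable {K : Type*} [Field K] [CharZero K]

section

variable {F : Type*} [Field F]

theorem exists_mul_add_mul_eq_one {u : F × F} (hu : u ≠ (0, 0)) :
    ∃ q s : F, u.1 * q + u.2 * s = 1 := by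
  obtain ⟨a, b⟩ := u
  by_cases ha : a = 0
  · have hb : b ≠ 0 := fun hb => hu (by rw [ha, hb])
    exact ⟨0, b⁻¹, by simp [hb]⟩
  · exact ⟨a⁻¹, 0, by simp [ha]⟩

theorem existsUnique_eq_smul_of_mul_add_mul_eq_zero {u w : F × F}
    (hu : u ≠ (0, 0)) (hw : u.1 * w.1 + u.2 * w.2 = 0) :
    ∃! k : F, w = (k * u.2, -(k * u.1)) := by
  obtain ⟨q, s, hqs⟩ := exists_mul_add_mul_eq_one hu
  refine ⟨s * w.1 - q * w.2, ?_, fun k (hk : w = _) => ?_⟩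
  · ext
    · linear_combination q * hw - w.1 * hqs
    · linear_combination s * hw - w.2 * hqs
  · rw [Prod.ext_iff] at hk
    linear_combination (-k) * hqs - s * hk.1 + q * hk.2

theorem act_eq_dLam (m : ℕ) {a₁ a₂ q s : F} (k : F) (h : a₁ * q + a₂ * s = 1) :
    act m a₂ q (-a₁) s 1 ((a₁, a₂), (0, 0), (k * a₂, -(k * a₁))) = dLam k := by
  have hdet : a₂ * s - q * -a₁ = 1 := by linear_combination h
  simp only [act, dLam, one_pow, one_mul, hdet, inv_one, mul_zero, sub_zero, Prod.mk.injEq]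
  refine ⟨⟨by ring, by linear_combination h⟩, ⟨trivial, by ring⟩, by linear_combination k * h, by ring⟩

theorem equiv_dLam_of_ne_zero (m : ℕ) {a₁ a₂ : F} (k : F) (hu : (a₁, a₂) ≠ (0, 0)) :
    Equiv' m ((a₁, a₂), (0, 0), (k * a₂, -(k * a₁))) (dLam k) := by
  obtain ⟨q, s, hqs⟩ := exists_mul_add_mul_eq_one hu
  refine ⟨a₂, q, -a₁, s, 1, ?_, one_ne_zero, act_eq_dLam m k hqs⟩
  rw [show a₂ * s - q * -a₁ = 1 by linear_combination hqs]
  exact one_ne_zero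

end

/-- For a degree-(m+2) codifferential with `v = (0,0)` and `u ≠ (0,0)`, there is a
unique `k ∈ K` with `w = k·(a₂, -a₁)`, and the structure is equivalent to `d_k`. -/
theorem equiv_dLam (m : ℕ) (d : Str K) (hd : IsCodiff m d)
    (hv : d.2.1 = (0, 0)) (hu : d.1 ≠ (0, 0)) :
    (∃! k : K, d.2.2 = (k * d.1.2, -(k * d.1.1))) ∧
    (∀ k : K, d.2.2 = (k * d.1.2, -(k * d.1.1)) → Equiv' m d (dLam k)) := by
  refine ⟨existsUnique_eq_smul_of_mul_add_mul_eq_zero hu hd.1, fun k hk => ?_⟩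
  obtain ⟨u, v, w⟩ := d
  obtain rfl : v = (0, 0) := hv
  obtain rfl : w = (k * u.2, -(k * u.1)) := hk
  exact equiv_dLam_of_ne_zero m k hu

end LinfClassification
end

section
/- Let (u,v,w) be a degree-(m+2) codifferential with v ≠ (0,0). Choose b₁,b₂ ∈ K with a₃b₂ − a₄b₁ = 1 and set k = a₁b₁ + a₂b₂; then k does not depend on the choice of (b₁,b₂). If k = 0 then (u,v,w) is equivalent to d_* = ((0,0),(1,0),(0,0)); if k ≠ 0 then (u,v,w) is equivalent to d_# = ((0,1),(1,0),(−(m+2),0)). -/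
namespace LinfClassification

variable {K : Type*} [Field K]

theorem eq_zero_of_fst_mul_eq_zero_of_snd_mul_eq_zero {v : K × K} (hv : v ≠ 0) {c : K}
    (h1 : v.1 * c = 0) (h2 : v.2 * c = 0) : c = 0 :=
  (smul_eq_zero.mp (Prod.ext (by simpa [mul_comm] using h1) (by simpa [mul_comm] using h2) :
    c • v = 0)).resolve_right hv

theorem dot_eq_of_det_eq {a1 a2 a3 a4 b1 b2 b1' b2' : K} (huv : a1 * a3 + a2 * a4 = 0)
    (hv : (a3, a4) ≠ 0) (hb : a3 * b2 - a4 * b1 = a3 * b2' - a4 * b1') :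
    a1 * b1 + a2 * b2 = a1 * b1' + a2 * b2' := by
  have h := eq_zero_of_fst_mul_eq_zero_of_snd_mul_eq_zero hv
    (c := a1 * b1' + a2 * b2' - (a1 * b1 + a2 * b2))
    (by linear_combination (b1' - b1) * huv - a2 * hb)
    (by linear_combination (b2' - b2) * huv + a1 * hb)
  exact (sub_eq_zero.mp h).symm

def adaptedForm (m : ℕ) (k : K) : Str K := ((0, k), (1, 0), (-((m : K) + 2) * k, 0))

theorem adaptedForm_zero (m : ℕ) : adaptedForm m (0 : K) = dStar := by
  simp [adaptedForm, dStar]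

theorem adaptedForm_one (m : ℕ) : adaptedForm m (1 : K) = dSharp m := by
  simp [adaptedForm, dSharp]

theorem equiv'_act (m : ℕ) (d : Str K) {p q r s : K} (hdet : p * s - q * r ≠ 0) :
    Equiv' m d (act m p q r s 1 d) :=
  ⟨p, q, r, s, 1, hdet, one_ne_zero, rfl⟩

namespace IsCodiff

variable {m : ℕ} {d : Str K}

theorem dot_u_v_eq_zero (hd : IsCodiff m d) : d.1.1 * d.2.1.1 + d.1.2 * d.2.1.2 = 0 :=
  hd.2.1

theorem w_eq (hd : IsCodiff m d) (hv : d.2.1 ≠ 0) :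
    d.2.2 = (-((m : K) + 2) * d.1.2, ((m : K) + 2) * d.1.1) := by
  obtain ⟨-, -, h3, h4, h5, h6⟩ := hd
  have hw1 := eq_zero_of_fst_mul_eq_zero_of_snd_mul_eq_zero hv h3 h4
  have hw2 := eq_zero_of_fst_mul_eq_zero_of_snd_mul_eq_zero hv h5 h6
  ext
  · linear_combination hw1
  · linear_combination hw2

theorem act_eq_adaptedForm (hd : IsCodiff m d) (hv : d.2.1 ≠ 0) {b1 b2 : K}
    (hdet : d.2.1.1 * b2 - b1 * d.2.1.2 ≠ 0) :
    act m d.2.1.1 b1 d.2.1.2 b2 1 d = adaptedForm m (d.1.1 * b1 + d.1.2 * b2) := by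
  have huv := hd.dot_u_v_eq_zero
  have hw := hd.w_eq hv
  obtain ⟨⟨a1, a2⟩, ⟨a3, a4⟩, a5, a6⟩ := d
  simp only [Prod.mk.injEq] at huv hw hdet ⊢
  obtain ⟨rfl, rfl⟩ := hw
  simp only [act, adaptedForm, one_pow, one_mul, Prod.mk.injEq]
  refine ⟨⟨huv, trivial⟩, ⟨?_, by ring⟩, by ring, by linear_combination ((m : K) + 2) * huv⟩
  rw [mul_comm b2 a3]
  exact inv_mul_cancel₀ hdet

end IsCodiff

variable [CharZero K] in
/-- For a degree-(m+2) codifferential with `v ≠ (0,0)`: choosing `b₁, b₂` with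
`a₃b₂ - a₄b₁ = 1` and setting `k = a₁b₁ + a₂b₂`, the value `k` is independent of
the choice of `(b₁, b₂)`; if `k = 0` the structure is equivalent to `d_*`, and if
`k ≠ 0` it is equivalent to `d_#`. -/
theorem equiv_dStar_or_dSharp (m : ℕ) (d : Str K) (hd : IsCodiff m d)
    (hv : d.2.1 ≠ (0, 0)) (b1 b2 : K) (hb : d.2.1.1 * b2 - d.2.1.2 * b1 = 1) :
    (∀ b1' b2' : K, d.2.1.1 * b2' - d.2.1.2 * b1' = 1 →
      d.1.1 * b1' + d.1.2 * b2' = d.1.1 * b1 + d.1.2 * b2) ∧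
    (d.1.1 * b1 + d.1.2 * b2 = 0 → Equiv' m d dStar) ∧
    (d.1.1 * b1 + d.1.2 * b2 ≠ 0 → Equiv' m d (dSharp m)) := by
  have hdet : d.2.1.1 * b2 - b1 * d.2.1.2 = 1 := by linear_combination hb
  refine ⟨fun b1' b2' hb' ↦ dot_eq_of_det_eq hd.dot_u_v_eq_zero hv (hb'.trans hb.symm), ?_, ?_⟩
  · intro hk
    have hdet_ne : d.2.1.1 * b2 - b1 * d.2.1.2 ≠ 0 := hdet ▸ one_ne_zero
    have h := equiv'_act m d hdet_ne
    rwa [hd.act_eq_adaptedForm hv hdet_ne, hk, adaptedForm_zero] at h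
  · intro hk
    set k := d.1.1 * b1 + d.1.2 * b2
    have hdet' : d.2.1.1 * (b2 * k⁻¹) - b1 * k⁻¹ * d.2.1.2 ≠ 0 := by
      rw [show d.2.1.1 * (b2 * k⁻¹) - b1 * k⁻¹ * d.2.1.2 = k⁻¹ by linear_combination k⁻¹ * hdet]
      exact inv_ne_zero hk
    have hk' : d.1.1 * (b1 * k⁻¹) + d.1.2 * (b2 * k⁻¹) = 1 := by
      rw [← mul_inv_cancel₀ hk]; ring
    have h := equiv'_act m d hdet'
    rwa [hd.act_eq_adaptedForm hv hdet', hk', adaptedForm_one] at h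

end LinfClassification
end

section
/- Every nonzero degree-(m+2) codifferential is equivalent to one of the normal forms: d_∞, d_*, d_#, or d_λ for some λ ∈ K. -/
namespace LinfClassification

variable {K : Type*} [Field K] [CharZero K]

/-- Every nonzero degree-(m+2) codifferential is equivalent to one of the normal
forms `d_∞`, `d_*`, `d_#`, or `d_λ` for some `λ ∈ K`. -/
theorem classification (m : ℕ) (d : Str K) (hd : IsCodiff m d)
    (hne : d ≠ ((0, 0), (0, 0), (0, 0))) :
    Equiv' m d dInf ∨ Equiv' m d dStar ∨ Equiv' m d (dSharp m) ∨
      ∃ lam : K, Equiv' m d (dLam lam) := by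
  obtain ⟨⟨a1, a2⟩, ⟨a3, a4⟩, ⟨a5, a6⟩⟩ := d
  obtain ⟨h1, h2, h3, h4, h5, h6⟩ := hd
  simp only at h1 h2 h3 h4 h5 h6
  have hM : ((m : K) + 2) ≠ 0 := by
    have h : ((m + 2 : ℕ) : K) ≠ 0 := Nat.cast_ne_zero.2 (by omega)
    exact_mod_cast h
  by_cases hu : a1 = 0 ∧ a2 = 0
  · obtain ⟨rfl, rfl⟩ := hu
    simp only [mul_zero, add_zero, sub_zero, zero_mul, zero_add] at h3 h4 h5 h6
    by_cases hw : a5 = 0 ∧ a6 = 0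
    · -- v ≠ 0, w = 0 : d_*
      obtain ⟨rfl, rfl⟩ := hw
      right; left
      by_cases ha3 : a3 = 0
      · have ha4 : a4 ≠ 0 := by
          intro h; exact hne (by simp [ha3, h])
        refine ⟨0, -a4⁻¹, a4, 0, 1, by field_simp; norm_num, one_ne_zero, ?_⟩
        simp only [act, dStar, Prod.mk.injEq, ha3]
        field_simp
        norm_num
      · refine ⟨a3, 0, a4, a3⁻¹, 1, by field_simp; simp, one_ne_zero, ?_⟩
        simp only [act, dStar, Prod.mk.injEq]
        field_simp
        ring_nf
        simp
    · -- w ≠ 0, so v = 0 : d_∞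
      left
      rcases not_and_or.mp hw with h | h
      · have hv3 : a3 = 0 := (mul_eq_zero.mp h3).resolve_right h
        have hv4 : a4 = 0 := (mul_eq_zero.mp h4).resolve_right h
        refine ⟨a5, 0, a6, a5⁻¹, 1, by field_simp; simp, one_ne_zero, ?_⟩
        simp only [act, dInf, Prod.mk.injEq, hv3, hv4]
        field_simp
        ring_nf
        simp
      · have hv3 : a3 = 0 := (mul_eq_zero.mp h5).resolve_right h
        have hv4 : a4 = 0 := (mul_eq_zero.mp h6).resolve_right h
        refine ⟨a5, -a6⁻¹, a6, 0, 1, by field_simp; simp, one_ne_zero, ?_⟩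
        simp only [act, dInf, Prod.mk.injEq, hv3, hv4]
        field_simp
        ring_nf
        simp
  · -- u ≠ 0 : normalize u to (0,1)
    obtain ⟨q, s, hqs⟩ : ∃ q s : K, a1 * q + a2 * s = 1 := by
      rcases not_and_or.mp hu with h | h
      · exact ⟨a1⁻¹, 0, by field_simp; simp⟩
      · exact ⟨0, a2⁻¹, by field_simp; simp⟩
    have hb : (s * a3 - q * a4) * ((s * a5 - q * a6) + ((m : K) + 2)) = 0 := by
      linear_combination s ^ 2 * h3 - s * q * h5 - q * s * h4 + q ^ 2 * h6
        - (s * a3 - q * a4) * ((m : K) + 2) * hqs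
    by_cases hb3 : s * a3 - q * a4 = 0
    · -- d_λ
      right; right; right
      refine ⟨s * a5 - q * a6, a2, q, -a1, s, 1, ?_, one_ne_zero, ?_⟩
      · have : a2 * s - q * -a1 = 1 := by linear_combination hqs
        rw [this]; exact one_ne_zero
      · have hdet : a2 * s - q * -a1 = 1 := by linear_combination hqs
        simp only [act, dLam, Prod.mk.injEq, hdet, inv_one, one_pow, one_mul, mul_one]
        refine ⟨⟨by ring, by linear_combination hqs⟩, ⟨by linear_combination hb3,
          by linear_combination h2⟩, trivial, by linear_combination h1⟩
    · -- d_#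
      right; right; left
      have hb5 : s * a5 - q * a6 = -((m : K) + 2) := by
        have h := (mul_eq_zero.mp hb).resolve_left hb3
        linear_combination h
      set b3 := s * a3 - q * a4 with hb3def
      refine ⟨a2 * b3, q, -(a1 * b3), s, 1, ?_, one_ne_zero, ?_⟩
      · have : a2 * b3 * s - q * -(a1 * b3) = b3 := by linear_combination b3 * hqs
        rw [this]; exact hb3
      · have hdet : a2 * b3 * s - q * -(a1 * b3) = b3 := by linear_combination b3 * hqs
        simp only [act, dSharp, Prod.mk.injEq, hdet, one_pow, one_mul]
        refine ⟨⟨by ring, by linear_combination hqs⟩,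
          ⟨by field_simp; exact hb3def.symm, ?_⟩, hb5, by linear_combination b3 * h1⟩
        have h : -(-(a1 * b3)) * a3 + a2 * b3 * a4 = b3 * (a1 * a3 + a2 * a4) := by ring
        rw [h, h2, mul_zero, mul_zero]


end LinfClassification
end

section
/- For λ, μ ∈ K, the degree-(m+2) codifferentials d_λ = ((0,1),(0,0),(λ,0)) and d_μ = ((0,1),(0,0),(μ,0)) are equivalent if and only if λ = μ. -/
namespace LinfClassification

variable {K : Type*} [Field K] [CharZero K]

/- `HasParam lam (u, v, w)` says `w = lam • J uᵀ` with `J` the rotation `(x, y) ↦ (y, -x)`,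
i.e. `det (w, x) = lam * u x` for every vector `x`. Since `u` transforms by `g` and `w` by the
adjugate of `g`, both sides of this identity pick up the same factor, so `lam` is an invariant. -/
def HasParam (lam : K) (d : Str K) : Prop :=
  d.2.2 = (lam * d.1.2, -(lam * d.1.1))

omit [CharZero K] in
theorem hasParam_act {lam : K} {d : Str K} (h : HasParam lam d) (m : ℕ) (p q r s t : K) :
    HasParam lam (act m p q r s t d) := by
  obtain ⟨⟨a₁, a₂⟩, _, ⟨a₅, a₆⟩⟩ := d
  simp only [HasParam, Prod.mk.injEq] at h
  obtain ⟨rfl, rfl⟩ := h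
  simp only [HasParam, act, Prod.mk.injEq]
  constructor <;> ring

omit [CharZero K] in
theorem hasParam_dLam_iff {lam mu : K} : HasParam lam (dLam mu) ↔ mu = lam := by
  simp [HasParam, dLam]

omit [CharZero K] in
theorem equiv'_refl (m : ℕ) (d : Str K) : Equiv' m d d :=
  ⟨1, 0, 0, 1, 1, by norm_num, one_ne_zero, by simp [act]⟩

/-- The codifferentials `d_λ` and `d_μ` are equivalent iff `λ = μ`. -/
theorem dLam_equiv_iff (m : ℕ) (lam mu : K) :
    Equiv' m (dLam lam) (dLam mu) ↔ lam = mu := by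
  constructor
  · rintro ⟨p, q, r, s, t, -, -, h⟩
    have : HasParam lam (dLam mu) := h ▸ hasParam_act (hasParam_dLam_iff.2 rfl) m p q r s t
    exact (hasParam_dLam_iff.1 this).symm
  · rintro rfl
    exact equiv'_refl m _

end LinfClassification
end

section
/- No two distinct members of the list of normal forms d_∞, d_*, d_#, and d_λ (λ ∈ K) are equivalent: d_∞, d_* and d_# are pairwise inequivalent, and none of d_∞, d_*, d_# is equivalent to d_λ for any λ ∈ K. -/
namespace LinfClassification

section Invariants

variable {K : Type*} [Field K] {m : ℕ}

lemma act_fst_eq_zero {p q r s t : K} {d : Str K} (hd : d.1 = 0) :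
    (act m p q r s t d).1 = 0 := by
  obtain ⟨⟨a₁, a₂⟩, _⟩ := d
  obtain ⟨rfl, rfl⟩ := Prod.mk_eq_zero.mp hd
  simp [act]

lemma act_snd_fst_eq_zero_iff {p q r s t : K} (hdet : p * s - q * r ≠ 0) (ht : t ≠ 0)
    {d : Str K} : (act m p q r s t d).2.1 = 0 ↔ d.2.1 = 0 := by
  obtain ⟨_, ⟨a₃, a₄⟩, _⟩ := d
  have hc : t ^ (m + 2) * (p * s - q * r)⁻¹ ≠ 0 := mul_ne_zero (pow_ne_zero _ ht) (inv_ne_zero hdet)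
  simp only [act, Prod.mk_eq_zero, mul_eq_zero_iff_left hc]
  constructor
  · -- applying `g` to `g⁻¹ v` recovers `v` up to the factor `det g`
    rintro ⟨h₃, h₄⟩
    refine ⟨(mul_eq_zero.mp ?_).resolve_left hdet, (mul_eq_zero.mp ?_).resolve_left hdet⟩
    · linear_combination p * h₃ + q * h₄
    · linear_combination r * h₃ + s * h₄
  · rintro ⟨rfl, rfl⟩
    simp

namespace Equiv'

variable {d d' : Str K}

lemma fst_eq_zero (h : Equiv' m d d') (hd : d.1 = 0) : d'.1 = 0 := by
  obtain ⟨p, q, r, s, t, -, -, rfl⟩ := h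
  exact act_fst_eq_zero hd

lemma snd_fst_eq_zero_iff (h : Equiv' m d d') : d'.2.1 = 0 ↔ d.2.1 = 0 := by
  obtain ⟨p, q, r, s, t, hdet, ht, rfl⟩ := h
  exact act_snd_fst_eq_zero_iff hdet ht

end Equiv'

end Invariants

variable {K : Type*} [Field K] [CharZero K]

/-- No two distinct normal forms are equivalent: `d_∞`, `d_*`, `d_#` are pairwise
inequivalent, and none of them is equivalent to `d_λ` for any `λ ∈ K`. -/
theorem normal_forms_inequivalent (m : ℕ) :
    ¬ Equiv' m (dInf : Str K) dStar ∧
    ¬ Equiv' m (dInf : Str K) (dSharp m) ∧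
    ¬ Equiv' m (dStar : Str K) (dSharp m) ∧
    (∀ lam : K,
      ¬ Equiv' m dInf (dLam lam) ∧
      ¬ Equiv' m dStar (dLam lam) ∧
      ¬ Equiv' m (dSharp m) (dLam lam)) := by
  have u_lam (lam : K) : (dLam lam).1 ≠ 0 := by simp [dLam]
  have u_sharp : (dSharp m : Str K).1 ≠ 0 := by simp [dSharp]
  have v_star : (dStar : Str K).2.1 ≠ 0 := by simp [dStar]
  have v_sharp : (dSharp m : Str K).2.1 ≠ 0 := by simp [dSharp]
  refine ⟨fun h => v_star (h.snd_fst_eq_zero_iff.mpr rfl),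
    fun h => u_sharp (h.fst_eq_zero rfl), fun h => u_sharp (h.fst_eq_zero rfl),
    fun lam => ⟨fun h => u_lam lam (h.fst_eq_zero rfl), fun h => u_lam lam (h.fst_eq_zero rfl),
      fun h => v_sharp (h.snd_fst_eq_zero_iff.mp rfl)⟩⟩

end LinfClassification
end

section
/- For every t ∈ K with t ≠ 0, the structure ((0,t),(1,0),(−t(m+2),0)) (that is, d_* perturbed by t times the cocycle ψ^{0,1,m+1}_3 − (m+2)ψ^{1,1,m}_1) is a degree-(m+2) codifferential and is equivalent to d_#; hence every neighborhood of d_* contains codifferentials equivalent to d_# (d_# jump-deforms to d_*). -/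
namespace LinfClassification

variable {K : Type*} [Field K]

theorem isCodiff_perturb_dStar (m : ℕ) (b c : K) :
    IsCodiff m (((0, b), (c, 0), (-(b * ((m : K) + 2)), 0)) : Str K) :=
  ⟨by ring, by ring, by ring, by ring, by ring, by ring⟩

theorem act_diag_one (m : ℕ) {s : K} (hs : s ≠ 0) (d : Str K) :
    act m 1 0 0 s 1 d =
      ((d.1.1, d.1.2 * s), (d.2.1.1, s⁻¹ * d.2.1.2), (s * d.2.2.1, d.2.2.2)) := by
  ext <;> simp [act, hs]

theorem equiv'_diag_one (m : ℕ) {s : K} (hs : s ≠ 0) (d : Str K) :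
    Equiv' m d ((d.1.1, d.1.2 * s), (d.2.1.1, s⁻¹ * d.2.1.2), (s * d.2.2.1, d.2.2.2)) :=
  ⟨1, 0, 0, s, 1, by simpa using hs, one_ne_zero, act_diag_one m hs d⟩

variable [CharZero K]

/-- For every `t ≠ 0`, the perturbation of `d_*` by `t` times the cocycle
`ψ^{0,1,m+1}_3 - (m+2)ψ^{1,1,m}_1`, namely `((0,t),(1,0),(-t(m+2),0))`, is a
degree-(m+2) codifferential equivalent to `d_#`: `d_#` jump-deforms to `d_*`. -/
theorem dSharp_jump_to_dStar (m : ℕ) (t : K) (ht : t ≠ 0) :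
    IsCodiff m ((((0 : K), t), (1, 0), (-(t * ((m : K) + 2)), 0)) : Str K) ∧
    Equiv' m ((((0 : K), t), (1, 0), (-(t * ((m : K) + 2)), 0)) : Str K)
      (dSharp m) := by
  refine ⟨isCodiff_perturb_dStar m t 1, ?_⟩
  convert equiv'_diag_one m (inv_ne_zero ht) _ using 1
  simp [dSharp, ht]

end LinfClassification
end

section
/- For every t ∈ K with t ≠ 0, the structure ((0,1),(t,0),(−(m+2),0)) (that is, d_{−(m+2)} perturbed by t times ψ^{0,0,m+2}_1) is a degree-(m+2) codifferential and is equivalent to d_#; hence every neighborhood of d_{−(m+2)} contains codifferentials equivalent to d_# (d_# jump-deforms to d_{−(m+2)}). -/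
namespace LinfClassification

variable {K : Type*} [Field K] [CharZero K]

theorem isCodiff_dLam_neg_add_dStar {F : Type*} [Field F] (m : ℕ) (x : F) :
    IsCodiff m ((((0 : F), 1), (x, 0), (-((m : F) + 2), 0)) : Str F) :=
  ⟨by ring, by ring, by ring, by ring, by ring, by ring⟩

theorem equiv_act_diag {F : Type*} [Field F] (m : ℕ) {a : F} (ha : a ≠ 0) (d : Str F) :
    Equiv' m d ((d.1.1 * a, d.1.2), (a⁻¹ * d.2.1.1, d.2.1.2), (d.2.2.1, a * d.2.2.2)) :=
  ⟨a, 0, 0, 1, 1, by simpa using ha, one_ne_zero, by simp [act, mul_comm, ha]⟩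

/-- For every `t ≠ 0`, the perturbation of `d_{-(m+2)}` by `t` times
`ψ^{0,0,m+2}_1`, namely `((0,1),(t,0),(-(m+2),0))`, is a degree-(m+2)
codifferential equivalent to `d_#`: `d_#` jump-deforms to `d_{-(m+2)}`. -/
theorem dSharp_jump_to_dLam (m : ℕ) (t : K) (ht : t ≠ 0) :
    IsCodiff m ((((0 : K), 1), (t, 0), (-((m : K) + 2), 0)) : Str K) ∧
    Equiv' m ((((0 : K), 1), (t, 0), (-((m : K) + 2), 0)) : Str K)
      (dSharp m) := by
  refine ⟨isCodiff_dLam_neg_add_dStar m t, ?_⟩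
  simpa [dSharp, ht] using
    equiv_act_diag m ht ((((0 : K), 1), (t, 0), (-((m : K) + 2), 0)) : Str K)

end LinfClassification
end

section
/- For every integer n ≥ m: the image under D(n−m−1) of the odd part of C(n−m−1) is the 3-dimensional span of E1, E3, E6, which has codimension 1 in the kernel of the even part of D(n), with complement spanned by mE4 − E5; and the image under D(n−m−1) of the even part of C(n−m−1) is the 2-dimensional span of O5, O6, which has codimension 1 in the kernel of the odd part of D(n), with complement spanned by O2. That is, H^{n+2}(d_∞) has dimension 1|1 for every n ≥ m, with representatives mφ^{0,1,n+1}_2 − φ^{0,0,n+2}_3 and ψ^{0,1,n+1}_3; in particular d_∞ admits nontrivial cocycles in every degree greater than m+2. -/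
/-! Neither component of `D(n)` depends on `n`, and each sends every basis vector to a multiple
of a basis vector. So the images are coordinate subspaces, cut out by the vanishing of the
coordinates that are never hit (indices are `0`-based: `v 1, v 3, v 4` are `E2, E4, E5`), and so
are the kernels, except that `E4` and `E5` both land on `O5`, which adds the single non-coordinate
cocycle `mE4 - E5`. -/

namespace LinfCohomology

/- Cochain conventions: for `n ≥ 0`, the even part of `C(n)` has coordinates
`E1,…,E6` (for `φ^{1,0,n+1}_1, φ^{1,0,n+1}_2, φ^{0,1,n+1}_1, φ^{0,1,n+1}_2,
φ^{0,0,n+2}_3, φ^{1,1,n}_3`) and the odd part has coordinates `O1,…,O6` (for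
`ψ^{1,0,n+1}_3, ψ^{0,1,n+1}_3, ψ^{0,0,n+2}_1, ψ^{0,0,n+2}_2, ψ^{1,1,n}_1,
ψ^{1,1,n}_2`); `C(-1)` has even coordinates `E1,…,E5` and odd `O1,…,O4`. -/

/-- The even part of the coboundary operator `D(n)` of `d_∞ = ψ^{1,1,m}_1`,
for `n ≥ 0`: `E2 ↦ O6`, `E4 ↦ -O5`, `E5 ↦ -mO5`, all other coordinates `↦ 0`. -/
def DeInf (K : Type*) [Field K] (m : ℕ) (_n : ℕ) :
    (Fin 6 → K) →ₗ[K] (Fin 6 → K) :=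
  Matrix.mulVecLin
    !![0, 0, 0, 0, 0, 0;
       0, 0, 0, 0, 0, 0;
       0, 0, 0, 0, 0, 0;
       0, 0, 0, 0, 0, 0;
       0, 0, 0, -1, -(m : K), 0;
       0, 1, 0, 0, 0, 0]

/-- The odd part of the coboundary operator `D(n)` of `d_∞`, for `n ≥ 0`:
`O1 ↦ E6`, `O3 ↦ E3`, `O4 ↦ -E1`, all other coordinates `↦ 0`. -/
def DoInf (K : Type*) [Field K] (_m : ℕ) (_n : ℕ) :
    (Fin 6 → K) →ₗ[K] (Fin 6 → K) :=
  Matrix.mulVecLin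
    !![0, 0, 0, -1, 0, 0;
       0, 0, 0, 0, 0, 0;
       0, 0, 1, 0, 0, 0;
       0, 0, 0, 0, 0, 0;
       0, 0, 0, 0, 0, 0;
       1, 0, 0, 0, 0, 0]

/-- The even part of `D(-1)` of `d_∞`: `E2 ↦ O6`, `E4 ↦ -O5`, `E5 ↦ -mO5`. -/
def DeInfNeg1 (K : Type*) [Field K] (m : ℕ) : (Fin 5 → K) →ₗ[K] (Fin 6 → K) :=
  Matrix.mulVecLin
    !![0, 0, 0, 0, 0;
       0, 0, 0, 0, 0;
       0, 0, 0, 0, 0;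
       0, 0, 0, 0, 0;
       0, 0, 0, -1, -(m : K);
       0, 1, 0, 0, 0]

/-- The odd part of `D(-1)` of `d_∞`: `O1 ↦ E6`, `O3 ↦ E3`, `O4 ↦ -E1`. -/
def DoInfNeg1 (K : Type*) [Field K] (_m : ℕ) : (Fin 4 → K) →ₗ[K] (Fin 6 → K) :=
  Matrix.mulVecLin
    !![0, 0, 0, -1;
       0, 0, 0, 0;
       0, 0, 1, 0;
       0, 0, 0, 0;
       0, 0, 0, 0;
       1, 0, 0, 0]

/-- The span of `E1, E3, E6`. -/
def SInf (K : Type*) [Field K] : Submodule K (Fin 6 → K) :=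
  Submodule.span K {(![1, 0, 0, 0, 0, 0] : Fin 6 → K),
    ![0, 0, 1, 0, 0, 0], ![0, 0, 0, 0, 0, 1]}

/-- The span of `O5, O6`. -/
def TInf (K : Type*) [Field K] : Submodule K (Fin 6 → K) :=
  Submodule.span K {(![0, 0, 0, 0, 1, 0] : Fin 6 → K), ![0, 0, 0, 0, 0, 1]}

end LinfCohomology

namespace Submodule

variable {R M : Type*} [Ring R] [AddCommGroup M] [Module R M]

theorem mem_sup_span_singleton_iff {p : Submodule R M} {v w : M} :
    v ∈ p ⊔ R ∙ w ↔ ∃ a : R, v + a • w ∈ p := by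
  simp only [mem_sup, mem_span_singleton]
  constructor
  · rintro ⟨y, hy, _, ⟨a, rfl⟩, rfl⟩
    exact ⟨-a, by simpa [add_assoc] using hy⟩
  · rintro ⟨a, h⟩
    exact ⟨_, h, _, ⟨-a, rfl⟩, by simp [add_assoc]⟩

end Submodule

section FinrankSpan

variable {K M : Type*} [DivisionRing K] [AddCommGroup M] [Module K M]

theorem finrank_span_pair_eq_two {x y : M} (h : LinearIndependent K ![x, y]) :
    Module.finrank K (Submodule.span K {x, y}) = 2 := by
  rw [← Matrix.range_cons_cons_empty x y ![], finrank_span_eq_card h, Fintype.card_fin]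

theorem finrank_span_triple_eq_three {x y z : M} (h : LinearIndependent K ![x, y, z]) :
    Module.finrank K (Submodule.span K {x, y, z}) = 3 := by
  rw [← Set.singleton_union, ← Matrix.range_cons_cons_empty y z ![], ← Matrix.range_cons,
    finrank_span_eq_card h, Fintype.card_fin]

end FinrankSpan

namespace LinfCohomology

section Computations

variable (K : Type*) [Field K] (m n : ℕ)

theorem DoInf_apply (v : Fin 6 → K) : DoInf K m n v = ![-v 3, 0, v 2, 0, 0, v 0] := by
  ext i; fin_cases i <;> simp [DoInf, Matrix.mulVec, dotProduct, Fin.sum_univ_six]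

theorem DeInf_apply (v : Fin 6 → K) :
    DeInf K m n v = ![0, 0, 0, 0, -v 3 - m * v 4, v 1] := by
  ext i; fin_cases i <;> simp [DeInf, Matrix.mulVec, dotProduct, Fin.sum_univ_six, sub_eq_add_neg]

theorem DoInfNeg1_apply (v : Fin 4 → K) : DoInfNeg1 K m v = ![-v 3, 0, v 2, 0, 0, v 0] := by
  ext i; fin_cases i <;> simp [DoInfNeg1, Matrix.mulVec, dotProduct, Fin.sum_univ_four]

theorem DeInfNeg1_apply (v : Fin 5 → K) :
    DeInfNeg1 K m v = ![0, 0, 0, 0, -v 3 - m * v 4, v 1] := by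
  ext i
  fin_cases i <;>
    simp [DeInfNeg1, Matrix.mulVec, dotProduct, Fin.sum_univ_five, sub_eq_add_neg]

variable {K} in
theorem mem_SInf_iff {v : Fin 6 → K} : v ∈ SInf K ↔ v 1 = 0 ∧ v 3 = 0 ∧ v 4 = 0 := by
  rw [SInf, Submodule.mem_span_triple]
  constructor
  · rintro ⟨a, b, c, rfl⟩
    simp
  · rintro ⟨h1, h3, h4⟩
    refine ⟨v 0, v 2, v 5, ?_⟩
    ext i; fin_cases i <;> simp [h1, h3, h4]

variable {K} in
theorem mem_TInf_iff {v : Fin 6 → K} :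
    v ∈ TInf K ↔ v 0 = 0 ∧ v 1 = 0 ∧ v 2 = 0 ∧ v 3 = 0 := by
  rw [TInf, Submodule.mem_span_pair]
  constructor
  · rintro ⟨a, b, rfl⟩
    simp
  · rintro ⟨h0, h1, h2, h3⟩
    refine ⟨v 4, v 5, ?_⟩
    ext i; fin_cases i <;> simp [h0, h1, h2, h3]

theorem finrank_SInf : Module.finrank K (SInf K) = 3 := by
  refine finrank_span_triple_eq_three (Fintype.linearIndependent_iff.mpr fun g hg i => ?_)
  fin_cases i
  · simpa [Fin.sum_univ_three] using congrFun hg 0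
  · simpa [Fin.sum_univ_three] using congrFun hg 2
  · simpa [Fin.sum_univ_three] using congrFun hg 5

theorem finrank_TInf : Module.finrank K (TInf K) = 2 := by
  refine finrank_span_pair_eq_two (Fintype.linearIndependent_iff.mpr fun g hg i => ?_)
  fin_cases i
  · simpa [Fin.sum_univ_two] using congrFun hg 4
  · simpa [Fin.sum_univ_two] using congrFun hg 5

variable {K m n}

theorem range_DoInf : LinearMap.range (DoInf K m n) = SInf K := by
  ext v
  simp only [LinearMap.mem_range, DoInf_apply, mem_SInf_iff]
  constructor
  · rintro ⟨w, rfl⟩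
    simp
  · rintro ⟨h1, h3, h4⟩
    refine ⟨![v 5, 0, v 2, -v 0, 0, 0], ?_⟩
    ext i; fin_cases i <;> simp [h1, h3, h4]

theorem range_DoInfNeg1 : LinearMap.range (DoInfNeg1 K m) = SInf K := by
  ext v
  simp only [LinearMap.mem_range, DoInfNeg1_apply, mem_SInf_iff]
  constructor
  · rintro ⟨w, rfl⟩
    simp
  · rintro ⟨h1, h3, h4⟩
    refine ⟨![v 5, 0, v 2, -v 0], ?_⟩
    ext i; fin_cases i <;> simp [h1, h3, h4]

theorem range_DeInf : LinearMap.range (DeInf K m n) = TInf K := by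
  ext v
  simp only [LinearMap.mem_range, DeInf_apply, mem_TInf_iff]
  constructor
  · rintro ⟨w, rfl⟩
    simp
  · rintro ⟨h0, h1, h2, h3⟩
    refine ⟨![0, v 5, 0, -v 4, 0, 0], ?_⟩
    ext i; fin_cases i <;> simp [h0, h1, h2, h3]

theorem range_DeInfNeg1 : LinearMap.range (DeInfNeg1 K m) = TInf K := by
  ext v
  simp only [LinearMap.mem_range, DeInfNeg1_apply, mem_TInf_iff]
  constructor
  · rintro ⟨w, rfl⟩
    simp
  · rintro ⟨h0, h1, h2, h3⟩
    refine ⟨![0, v 5, 0, -v 4, 0], ?_⟩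
    ext i; fin_cases i <;> simp [h0, h1, h2, h3]

theorem ker_DeInf :
    LinearMap.ker (DeInf K m n) = SInf K ⊔ K ∙ ![0, 0, 0, (m : K), -1, 0] := by
  ext v
  simp only [LinearMap.mem_ker, DeInf_apply, Submodule.mem_sup_span_singleton_iff, mem_SInf_iff,
    Matrix.cons_eq_zero_iff, Matrix.zero_empty, Matrix.smul_cons, Matrix.smul_empty,
    smul_eq_mul, Pi.add_apply, Matrix.cons_val, mul_zero, add_zero, and_true, true_and]
  exact ⟨fun ⟨h, h1⟩ => ⟨v 4, h1, by linear_combination -h, by ring⟩,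
    fun ⟨a, h1, h3, h4⟩ => ⟨by linear_combination -h3 - (m : K) * h4, h1⟩⟩

theorem ker_DoInf :
    LinearMap.ker (DoInf K m n) = TInf K ⊔ K ∙ ![0, 1, 0, 0, 0, 0] := by
  ext v
  simp only [LinearMap.mem_ker, DoInf_apply, Submodule.mem_sup_span_singleton_iff, mem_TInf_iff,
    Matrix.cons_eq_zero_iff, Matrix.zero_empty, Matrix.smul_cons, Matrix.smul_empty,
    smul_eq_mul, Pi.add_apply, Matrix.cons_val, mul_zero, add_zero, and_true, true_and]
  exact ⟨fun ⟨h3, h2, h0⟩ => ⟨-v 1, h0, by ring, h2, neg_eq_zero.mp h3⟩,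
    fun ⟨_, h0, _, h2, h3⟩ => ⟨neg_eq_zero.mpr h3, h2, h0⟩⟩

end Computations

theorem dInf_high_cohomology_general (K : Type*) [Field K] (m n : ℕ) :
    (m = n → LinearMap.range (DoInfNeg1 K m) = SInf K ∧
      LinearMap.range (DeInfNeg1 K m) = TInf K) ∧
    (m < n → LinearMap.range (DoInf K m (n - m - 1)) = SInf K ∧
      LinearMap.range (DeInf K m (n - m - 1)) = TInf K) ∧
    Module.finrank K (SInf K) = 3 ∧
    Module.finrank K (TInf K) = 2 ∧
    LinearMap.ker (DeInf K m n) =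
      SInf K ⊔ Submodule.span K {(![0, 0, 0, (m : K), -1, 0] : Fin 6 → K)} ∧
    (![0, 0, 0, (m : K), -1, 0] : Fin 6 → K) ∉ SInf K ∧
    LinearMap.ker (DoInf K m n) =
      TInf K ⊔ Submodule.span K {(![0, 1, 0, 0, 0, 0] : Fin 6 → K)} ∧
    (![0, 1, 0, 0, 0, 0] : Fin 6 → K) ∉ TInf K :=
  ⟨fun _ => ⟨range_DoInfNeg1, range_DeInfNeg1⟩, fun _ => ⟨range_DoInf, range_DeInf⟩,
    finrank_SInf K, finrank_TInf K, ker_DeInf, by simp [mem_SInf_iff], ker_DoInf,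
    by simp [mem_TInf_iff]⟩

/-- For `d_∞` and every `n ≥ m`: the image under `D(n-m-1)` of the odd part of
`C(n-m-1)` is the 3-dimensional span of `E1, E3, E6`, of codimension 1 in the
kernel of the even part of `D(n)` with complement spanned by `mE4-E5`; and the
image under `D(n-m-1)` of the even part of `C(n-m-1)` is the 2-dimensional span
of `O5, O6`, of codimension 1 in the kernel of the odd part of `D(n)` with
complement spanned by `O2`. That is, `H^{n+2}(d_∞)` has dimension `1|1` for every
`n ≥ m`, with representatives `mφ^{0,1,n+1}_2 - φ^{0,0,n+2}_3` and
`ψ^{0,1,n+1}_3`; in particular `d_∞` admits nontrivial cocycles in every degree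
greater than `m+2`. -/
theorem dInf_high_cohomology (K : Type*) [Field K] [CharZero K] (m n : ℕ)
    (hmn : m ≤ n) :
    (m = n → LinearMap.range (DoInfNeg1 K m) = SInf K ∧
      LinearMap.range (DeInfNeg1 K m) = TInf K) ∧
    (m < n → LinearMap.range (DoInf K m (n - m - 1)) = SInf K ∧
      LinearMap.range (DeInf K m (n - m - 1)) = TInf K) ∧
    Module.finrank K (SInf K) = 3 ∧
    Module.finrank K (TInf K) = 2 ∧
    LinearMap.ker (DeInf K m n) =
      SInf K ⊔ Submodule.span K {(![0, 0, 0, (m : K), -1, 0] : Fin 6 → K)} ∧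
    (![0, 0, 0, (m : K), -1, 0] : Fin 6 → K) ∉ SInf K ∧
    LinearMap.ker (DoInf K m n) =
      TInf K ⊔ Submodule.span K {(![0, 1, 0, 0, 0, 0] : Fin 6 → K)} ∧
    (![0, 1, 0, 0, 0, 0] : Fin 6 → K) ∉ TInf K :=
  dInf_high_cohomology_general K m n

end LinfCohomology
end
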